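/- Every real third-order tensor admits an exact tensor-train (TT) decomposition with TT ranks bounded by the unfolding ranks: for any K : Fin n1 × Fin n2 × Fin n3 → ℝ there exist r1 ≤ min(n1, n2*n3), r2 ≤ min(n1*n2, n3) and cores G1 : Fin n1 × Fin r1 → ℝ, G2 : Fin r1 × Fin n2 × Fin r2 → ℝ, G3 : Fin r2 × Fin n3 → ℝ such that for all indices (i,j,k), K i j k = ∑_{α1 ∈ Fin r1} ∑_{α2 ∈ Fin r2} G1 i α1 * G2 α1 j α2 * G3 α2 k. -/
import Mathlib


/-- Every real third-order tensor admits an exact tensor-train (TT) decomposition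
with TT ranks bounded by the unfolding ranks. -/
theorem tt_decomposition_third_order (n1 n2 n3 : ℕ)
    (K : Fin n1 → Fin n2 → Fin n3 → ℝ) :
    ∃ (r1 r2 : ℕ), r1 ≤ min n1 (n2 * n3) ∧ r2 ≤ min (n1 * n2) n3 ∧
      ∃ (G1 : Fin n1 → Fin r1 → ℝ) (G2 : Fin r1 → Fin n2 → Fin r2 → ℝ)
        (G3 : Fin r2 → Fin n3 → ℝ),
        ∀ (i : Fin n1) (j : Fin n2) (k : Fin n3),
          K i j k = ∑ α1 : Fin r1, ∑ α2 : Fin r2, G1 i α1 * G2 α1 j α2 * G3 α2 k := by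
  rcases Nat.eq_zero_or_pos n2 with h2 | h2
  · subst h2
    exact ⟨0, 0, by simp, by simp, fun _ x => x.elim0, fun _ j => j.elim0,
      fun x => x.elim0, fun _ j => j.elim0⟩
  rcases le_or_gt n1 (n2 * n3) with h1 | h1
  · rcases le_or_gt n3 (n1 * n2) with h3 | h3
    · -- r1 = n1, r2 = n3, identity cores
      refine ⟨n1, n3, le_min le_rfl h1, le_min h3 le_rfl,
        fun i α1 => if i = α1 then 1 else 0, fun α1 j α2 => K α1 j α2,
        fun α2 k => if α2 = k then 1 else 0, fun i j k => ?_⟩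
      simp [ite_mul, mul_ite, Finset.sum_ite_eq, Finset.sum_ite_eq']
    · -- r1 = n1, r2 = n1 * n2
      refine ⟨n1, n1 * n2, le_min le_rfl h1, le_min le_rfl h3.le,
        fun i α1 => if i = α1 then 1 else 0,
        fun α1 j α2 => if α2 = finProdFinEquiv (α1, j) then 1 else 0,
        fun α2 k => K (finProdFinEquiv.symm α2).1 (finProdFinEquiv.symm α2).2 k,
        fun i j k => ?_⟩
      simp only [ite_mul, mul_ite, one_mul, zero_mul, mul_one, mul_zero,
        Finset.sum_ite_eq, Finset.sum_ite_eq', Finset.mem_univ, if_true,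
        Equiv.symm_apply_apply]
  · -- r1 = n2 * n3, r2 = n3
    have h3 : n3 ≤ n1 * n2 :=
      le_trans (le_trans (Nat.le_mul_of_pos_left n3 h2) h1.le) (Nat.le_mul_of_pos_right n1 h2)
    refine ⟨n2 * n3, n3, le_min h1.le le_rfl, le_min h3 le_rfl,
      fun i α1 => K i (finProdFinEquiv.symm α1).1 (finProdFinEquiv.symm α1).2,
      fun α1 j α2 => if (finProdFinEquiv.symm α1).1 = j ∧ (finProdFinEquiv.symm α1).2 = α2
        then 1 else 0,
      fun α2 k => if α2 = k then 1 else 0, fun i j k => ?_⟩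
    rw [← Equiv.sum_comp (finProdFinEquiv : Fin n2 × Fin n3 ≃ Fin (n2 * n3))]
    simp [ite_mul, mul_ite, ite_and, Finset.sum_ite_eq, Finset.sum_ite_eq',
      Fintype.sum_prod_type]
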